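/- Fix reals α, β with 0 ≤ α < 1 and β > 2. For every word w in the language 𝓛 of Σ there exists a word u over {0,…,ℓ} such that the concatenation wu belongs to 𝓛 and k₁(wu) = 0 and k₂(wu) = 0; that is, from every vertex of the Hofbauer-type graph there is a path to the root vertex [0,0]. -/

import Mathlib

noncomputable section

namespace IntermediateBeta

/-- The intermediate beta transformation `x ↦ βx + α mod 1`. -/
def F (α β : ℝ) (x : ℝ) : ℝ := Int.fract (β * x + α)

/-- The digit sequence of a point: `Om α β x n` is the index `i` with `F^[n] x ∈ J_i`.
For `y ∈ [0,1)` we have `y ∈ J_i ↔ ⌊β y + α⌋ = i`. -/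
def Om (α β : ℝ) (x : ℝ) : ℕ → ℕ := fun n => (⌊β * ((F α β)^[n] x) + α⌋).toNat

/-- `ℓ = ⌈α + β⌉ - 1`. -/
def ell (α β : ℝ) : ℕ := ⌈α + β⌉₊ - 1

/-- The subshift `Σ`: closure (in the product topology) of the set of digit sequences
of points of `[0,1)`. -/
def Sig (α β : ℝ) : Set (ℕ → ℕ) := closure (Om α β '' Set.Ico (0 : ℝ) 1)

/-- The shift map. -/
def shift (x : ℕ → ℕ) : ℕ → ℕ := fun n => x (n + 1)

/-- Lexicographic order on one-sided sequences. -/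
def lexLe (x y : ℕ → ℕ) : Prop := x = y ∨ ∃ k, (∀ i < k, x i = y i) ∧ x k < y k

/-- The language of a subset `S` of the full shift: the finite words occurring as
initial segments of elements of `S`. -/
def langOf (S : Set (ℕ → ℕ)) (w : List ℕ) : Prop :=
  ∃ x ∈ S, ∀ i : Fin w.length, x i = w.get i

/-- Membership in the language `𝓛` of the subshift `Σ`. -/
def inLang (α β : ℝ) (w : List ℕ) : Prop := langOf (Sig α β) w

/-- The tail segment of `w` of length `k` agrees with the initial segment of `s`
of length `k`. -/
def tailAgrees (s : ℕ → ℕ) (w : List ℕ) (k : ℕ) : Prop :=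
  k ≤ w.length ∧ ∀ i < k, w.getD (w.length - k + i) 0 = s i

/-- `kmax s w` is the length of the longest tail segment of `w` agreeing with an
initial segment of `s` (`k₁(w)` when `s = a`, `k₂(w)` when `s = b`). -/
def kmax (s : ℕ → ℕ) (w : List ℕ) : ℕ := sSup {k | tailAgrees s w k}

/-- `D a b` is the set of lengths `n` such that the initial segment of `b` of
length `n` occurs somewhere in `a`.  Thus `D a b` is the set `𝖣(a)` of the paper
and `D b a` is `𝖣(b)`. -/
def D (a b : ℕ → ℕ) : Set ℕ := {n | ∃ j, ∀ i < n, b i = a (j + i)}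

/-- Gluing of the words `w 0, v 0, w 1, v 1, …, v (n-1), w n`. -/
def glue {n : ℕ} (w : Fin (n + 1) → List ℕ) (v : Fin n → List ℕ) : List ℕ :=
  (List.ofFn fun i : Fin n => w i.castSucc ++ v i).flatten ++ w (Fin.last n)

/-- A collection `G` of words inside the language `lang` has specification: there
is `τ ∈ ℕ` such that any finite list of words of `G` can be glued, with gluing
words from `lang` of length `τ`, into a word of `lang`. -/
def HasSpec (lang G : List ℕ → Prop) : Prop :=
  ∃ τ : ℕ, 1 ≤ τ ∧ ∀ n : ℕ, ∀ w : Fin (n + 1) → List ℕ, (∀ i, G (w i)) →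
    ∃ v : Fin n → List ℕ, (∀ i, (v i).length = τ ∧ lang (v i)) ∧ lang (glue w v)

/-- The initial segment of a sequence, as a finite word. -/
def pre (s : ℕ → ℕ) (n : ℕ) : List ℕ := List.ofFn fun i : Fin n => s i

/-- Lexicographic order for finite words (of equal length). -/
def wordLe (u v : List ℕ) : Prop :=
  u = v ∨ ∃ k, (∀ i < k, u.getD i 0 = v.getD i 0) ∧ u.getD k 0 < v.getD k 0

/-- Concatenation of a finite word with an infinite sequence. -/
def wcat (w : List ℕ) (x : ℕ → ℕ) : ℕ → ℕ := fun n =>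
  if h : n < w.length then w.get ⟨n, h⟩ else x (n - w.length)

/-!
First extend `w` until every point of `[0, 1)` can follow it. The points that can follow a word
contain an interval, and since `β > 2` one of its at most two pieces in the branch intervals `J_d`
is stretched by a factor at least `β / 2`, unless it contains a whole `J_d`, whose image is
`[0, 1)`. Then append a block `1^r c 1^m`, the itinerary of a preimage of the fixed point of the
branch `J_1`, with a letter `c ≠ 1` chosen so that neither `a` nor `b` starts with `c 1 1 1 …`.
A suffix of the result inside the block starts with `1` or with `c 1^m`, so it is no prefix of
`a` or `b` once `m` is large; a longer one would make `1^r c 1^m` occur in `a` or `b` at a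
bounded position, which fails for `r` and then `m` large.
-/
open Set Filter

variable {α β : ℝ}

lemma F_mem_Ico (x : ℝ) : F α β x ∈ Ico (0 : ℝ) 1 :=
  ⟨Int.fract_nonneg _, Int.fract_lt_one _⟩

lemma iterate_F_mem_Ico {x : ℝ} (hx : x ∈ Ico (0 : ℝ) 1) : ∀ n, (F α β)^[n] x ∈ Ico (0 : ℝ) 1
  | 0 => hx
  | n + 1 => by rw [Function.iterate_succ_apply']; exact F_mem_Ico _

lemma Om_succ (x : ℝ) (n : ℕ) : Om α β x (n + 1) = Om α β (F α β x) n := by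
  simp only [Om, Function.iterate_succ_apply]

lemma Om_apply (x : ℝ) (n : ℕ) : Om α β x n = Om α β ((F α β)^[n] x) 0 := rfl

lemma Om_zero_eq {x : ℝ} {d : ℕ} (h₁ : (d : ℝ) ≤ β * x + α) (h₂ : β * x + α < d + 1) :
    Om α β x 0 = d := by
  have : ⌊β * x + α⌋ = d := Int.floor_eq_iff.2 ⟨by exact_mod_cast h₁, by exact_mod_cast h₂⟩
  simp [Om, this]

lemma F_eq_of_le_of_lt {x : ℝ} {d : ℕ} (h₁ : (d : ℝ) ≤ β * x + α) (h₂ : β * x + α < d + 1) :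
    F α β x = β * x + α - d := by
  have : ⌊β * x + α⌋ = d := Int.floor_eq_iff.2 ⟨by exact_mod_cast h₁, by exact_mod_cast h₂⟩
  rw [F, Int.fract, this, Int.cast_natCast]

lemma Om_zero_le_and_lt {x : ℝ} (h : 0 ≤ β * x + α) :
    (Om α β x 0 : ℝ) ≤ β * x + α ∧ β * x + α < Om α β x 0 + 1 := by
  have hcast : ((Om α β x 0 : ℕ) : ℝ) = ⌊β * x + α⌋ := by
    simp only [Om, Function.iterate_zero_apply]
    exact_mod_cast Int.toNat_of_nonneg (Int.floor_nonneg.2 h)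
  rw [hcast]
  exact ⟨Int.floor_le _, Int.lt_floor_add_one _⟩

lemma wcat_singleton_succ (d : ℕ) (z : ℕ → ℕ) (n : ℕ) : wcat [d] z (n + 1) = z n := by
  simp [wcat]

lemma wcat_nil (z : ℕ → ℕ) : wcat [] z = z := by
  funext n; simp [wcat]

lemma wcat_append (u v : List ℕ) (z : ℕ → ℕ) : wcat (u ++ v) z = wcat u (wcat v z) := by
  funext n
  simp only [wcat, List.length_append, List.get_eq_getElem]
  by_cases hu : n < u.length
  · rw [dif_pos (by omega), dif_pos hu, List.getElem_append_left hu]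
  · rw [dif_neg hu]
    by_cases hv : n < u.length + v.length
    · rw [dif_pos hv, dif_pos (by omega), List.getElem_append_right (by omega)]
    · rw [dif_neg hv, dif_neg (by omega), Nat.sub_sub]

lemma wcat_replicate_one (m : ℕ) : wcat (List.replicate m 1) (fun _ => 1) = fun _ => 1 := by
  funext n
  by_cases h : n < m <;> simp [wcat, h]

lemma Om_preimage {y : ℝ} {d : ℕ} (hβ : 0 < β) (hy : y ∈ Ico (0 : ℝ) 1) (h₁ : α ≤ y + d)
    (h₂ : y + d < α + β) :
    (y + d - α) / β ∈ Ico (0 : ℝ) 1 ∧ Om α β ((y + d - α) / β) = wcat [d] (Om α β y) := by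
  have hx : β * ((y + d - α) / β) + α = y + d := by field_simp; ring
  have h0 : Om α β ((y + d - α) / β) 0 = d :=
    Om_zero_eq (by rw [hx]; linarith [hy.1]) (by rw [hx]; linarith [hy.2])
  have hF : F α β ((y + d - α) / β) = y := by
    rw [F_eq_of_le_of_lt (by rw [hx]; linarith [hy.1]) (by rw [hx]; linarith [hy.2]), hx]; ring
  refine ⟨⟨div_nonneg (by linarith) hβ.le, (div_lt_one hβ).2 (by linarith)⟩, funext fun n => ?_⟩
  cases n with
  | zero => exact h0
  | succ n => rw [Om_succ, hF, wcat_singleton_succ]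

def fixedPt (α β : ℝ) : ℝ := (1 - α) / (β - 1)

lemma beta_mul_fixedPt_add (hβ : 1 < β) : β * fixedPt α β + α = fixedPt α β + 1 := by
  have : β - 1 ≠ 0 := by linarith
  rw [fixedPt]; field_simp; ring

lemma fixedPt_mem_Ico (hα0 : 0 ≤ α) (hα1 : α < 1) (hβ : 2 < β) :
    fixedPt α β ∈ Ico (0 : ℝ) 1 :=
  ⟨div_nonneg (by linarith) (by linarith), (div_lt_one (by linarith)).2 (by linarith)⟩

lemma Om_fixedPt (hα0 : 0 ≤ α) (hα1 : α < 1) (hβ : 2 < β) :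
    Om α β (fixedPt α β) = fun _ => 1 := by
  have hp := fixedPt_mem_Ico hα0 hα1 hβ
  have hpre := (Om_preimage (α := α) (d := 1) (by linarith) hp (by push_cast; linarith [hp.1])
    (by push_cast; linarith [hp.2])).2
  have hself : (fixedPt α β + (1 : ℕ) - α) / β = fixedPt α β := by
    rw [div_eq_iff (by linarith), Nat.cast_one, ← beta_mul_fixedPt_add (by linarith)]; ring
  rw [hself] at hpre
  funext n
  induction n with
  | zero => rw [hpre]; rfl
  | succ n ih => rw [hpre, wcat_singleton_succ, ih]

lemma F_sub_fixedPt {z : ℝ} (hβ : 1 < β) (h₁ : 1 ≤ β * z + α) (h₂ : β * z + α < 2) :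
    F α β z - fixedPt α β = β * (z - fixedPt α β) := by
  rw [F_eq_of_le_of_lt (d := 1) (by exact_mod_cast h₁) (by norm_num; linarith)]
  linear_combination beta_mul_fixedPt_add (α := α) hβ

lemma iterate_F_sub_fixedPt {y : ℝ} (hα0 : 0 ≤ α) (hβ : 1 < β) (hy : y ∈ Ico (0 : ℝ) 1) {n : ℕ}
    (h : ∀ i < n, Om α β y i = 1) :
    (F α β)^[n] y - fixedPt α β = β ^ n * (y - fixedPt α β) := by
  induction n with
  | zero => simp
  | succ n ih =>
    have hz := Om_zero_le_and_lt (α := α) (β := β)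
      (x := (F α β)^[n] y) (by nlinarith [(iterate_F_mem_Ico (α := α) (β := β) hy n).1])
    rw [← Om_apply, h n n.lt_succ_self] at hz
    push_cast at hz
    rw [Function.iterate_succ_apply', F_sub_fixedPt hβ hz.1 (by linarith [hz.2]),
      ih fun i hi => h i (by omega)]
    ring

lemma eq_fixedPt_of_forall_Om_eq_one {y : ℝ} (hα0 : 0 ≤ α) (hα1 : α < 1) (hβ : 2 < β)
    (hy : y ∈ Ico (0 : ℝ) 1) (h : ∀ n, Om α β y n = 1) : y = fixedPt α β := by
  by_contra hne
  have hd : 0 < |y - fixedPt α β| := abs_pos.2 (sub_ne_zero.2 hne)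
  obtain ⟨n, hn⟩ := pow_unbounded_of_one_lt (1 / |y - fixedPt α β|) (by linarith : (1 : ℝ) < β)
  have hp := fixedPt_mem_Ico hα0 hα1 hβ
  have hyn := iterate_F_mem_Ico (α := α) (β := β) hy n
  have hlt : |(F α β)^[n] y - fixedPt α β| < 1 := abs_sub_lt_iff.2
    ⟨by linarith [hyn.2, hp.1], by linarith [hyn.1, hp.2]⟩
  rw [iterate_F_sub_fixedPt hα0 (by linarith) hy fun i _ => h i, abs_mul,
    abs_of_pos (pow_pos (by linarith) n)] at hlt
  rw [div_lt_iff₀ hd] at hn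
  linarith

lemma exists_Om_eq_one_and_two_le {y : ℝ} (hα0 : 0 ≤ α) (hα1 : α < 1) (hβ : 2 < β)
    (hy : y ∈ Ico (0 : ℝ) 1) (h : fixedPt α β < y) :
    ∃ s, (∀ i < s, Om α β y i = 1) ∧ 2 ≤ Om α β y s := by
  by_contra! hne
  refine h.ne' (eq_fixedPt_of_forall_Om_eq_one hα0 hα1 hβ hy fun n => ?_)
  induction n using Nat.strong_induction_on with
  | _ n ih =>
    have hsub := iterate_F_sub_fixedPt hα0 (by linarith) hy ih
    have hz := Om_zero_le_and_lt (α := α) (β := β)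
      (x := (F α β)^[n] y) (by nlinarith [(iterate_F_mem_Ico (α := α) (β := β) hy n).1])
    rw [← Om_apply] at hz
    have hright : 0 < (F α β)^[n] y - fixedPt α β := by
      rw [hsub]; exact mul_pos (pow_pos (by linarith) n) (by linarith)
    have hfix := beta_mul_fixedPt_add (α := α) (by linarith : 1 < β)
    have hpos : 0 < Om α β y n :=
      (Nat.cast_pos (α := ℝ)).1 (by nlinarith [(fixedPt_mem_Ico hα0 hα1 hβ).1])
    have := hne n ih
    omega

lemma not_lexLe_of_lt {x y : ℕ → ℕ} {n : ℕ} (hle : ∀ i < n, y i ≤ x i) (hlt : y n < x n) :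
    ¬ lexLe x y := by
  rintro (rfl | ⟨k, hk, hxk⟩)
  · exact lt_irrefl _ hlt
  · rcases lt_trichotomy k n with h | rfl | h
    · exact (hle k h).not_gt hxk
    · exact lt_asymm hxk hlt
    · exact hlt.ne' (hk n h)

lemma Om_mem_Sig {x : ℝ} (hx : x ∈ Ico (0 : ℝ) 1) : Om α β x ∈ Sig α β :=
  subset_closure ⟨x, hx, rfl⟩

lemma two_le_of_forall_lexLe {b : ℕ → ℕ} (hα0 : 0 ≤ α) (hα1 : α < 1) (hβ : 2 < β)
    (hbsup : ∀ y ∈ Sig α β, lexLe y b) : 2 ≤ b 0 := by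
  obtain ⟨hx, hOm⟩ := Om_preimage (α := α) (β := β) (y := 0) (d := 2) (by linarith)
    ⟨le_rfl, one_pos⟩ (by push_cast; linarith) (by push_cast; linarith)
  by_contra! h
  exact not_lexLe_of_lt (n := 0) (fun _ h => absurd h (Nat.not_lt_zero _))
    (by rw [hOm]; exact h) (hbsup _ (Om_mem_Sig hx))

/-- Above the fixed point, a point with first digit `2` has an itinerary `2 1^s d …` with `d ≥ 2`,
which is lexicographically larger than `2 1 1 1 …`. -/
lemma exists_ne_one_of_forall_lexLe {b : ℕ → ℕ} (hα0 : 0 ≤ α) (hα1 : α < 1) (hβ : 2 < β)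
    (hbsup : ∀ y ∈ Sig α β, lexLe y b) (hfix : fixedPt α β < α + β - 2) (hb0 : b 0 = 2) :
    ∃ i, b (i + 1) ≠ 1 := by
  obtain ⟨y, hfy, hy⟩ := exists_between (lt_min (fixedPt_mem_Ico hα0 hα1 hβ).2 hfix)
  have hyI : y ∈ Ico (0 : ℝ) 1 :=
    ⟨(fixedPt_mem_Ico hα0 hα1 hβ).1.trans hfy.le, hy.trans_le (min_le_left _ _)⟩
  obtain ⟨s, hones, htwo⟩ := exists_Om_eq_one_and_two_le hα0 hα1 hβ hyI hfy
  obtain ⟨hx, hOm⟩ := Om_preimage (α := α) (β := β) (d := 2) (by linarith) hyI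
    (by push_cast; linarith [hyI.1]) (by push_cast; linarith [min_le_right 1 (α + β - 2)])
  by_contra! hb
  refine not_lexLe_of_lt (n := s + 1) (fun i hi => ?_) ?_ (hbsup _ (Om_mem_Sig hx))
  · rw [hOm]
    cases i with
    | zero => rw [hb0]; rfl
    | succ i => rw [hb i, wcat_singleton_succ, hones i (by omega)]
  · rw [hOm, hb s, wcat_singleton_succ]; omega

lemma Om_zero_zero (hα0 : 0 ≤ α) (hα1 : α < 1) : Om α β 0 0 = 0 :=
  Om_zero_eq (by simpa using hα0) (by simpa using hα1)

lemma Om_zero_succ (hα0 : 0 ≤ α) (hα1 : α < 1) (n : ℕ) : Om α β 0 (n + 1) = Om α β α n := by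
  rw [Om_succ, F, mul_zero, zero_add, Int.fract_eq_self.2 ⟨hα0, hα1⟩]

/-- The middle letter `c` of the block `1^r c 1^m` that ends the path to the root. -/
lemma exists_separating_digit {b : ℕ → ℕ} (hα0 : 0 ≤ α) (hα1 : α < 1) (hβ : 2 < β)
    (hbsup : ∀ y ∈ Sig α β, lexLe y b) :
    ∃ c : ℕ, c ≠ 1 ∧ α ≤ fixedPt α β + c ∧ fixedPt α β + c < α + β ∧
      (Om α β 0 0 = c → ∃ i, Om α β 0 (i + 1) ≠ 1) ∧ (b 0 = c → ∃ i, b (i + 1) ≠ 1) := by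
  have hp := fixedPt_mem_Ico hα0 hα1 hβ
  by_cases hfix : fixedPt α β < α + β - 2
  · refine ⟨2, by norm_num, by push_cast; linarith [hp.1], by push_cast; linarith, fun h => ?_,
      exists_ne_one_of_forall_lexLe hα0 hα1 hβ hbsup hfix⟩
    rw [Om_zero_zero hα0 hα1] at h; exact absurd h (by norm_num)
  · refine ⟨0, by norm_num, by push_cast; linarith, by push_cast; linarith [hp.2], fun _ => ?_,
      fun h => absurd (two_le_of_forall_lexLe hα0 hα1 hβ hbsup) (by omega)⟩
    by_contra! h
    have := eq_fixedPt_of_forall_Om_eq_one hα0 hα1 hβ ⟨hα0, hα1⟩ fun n =>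
      (Om_zero_succ hα0 hα1 n).symm.trans (h n)
    linarith

/-- Every point `t` of `[u, v) ⊆ [0, 1]` can follow the word `W`: `W` followed by the itinerary of
`t` is again an itinerary. -/
def Covers (α β : ℝ) (W : List ℕ) (u v : ℝ) : Prop :=
  0 ≤ u ∧ u < v ∧ v ≤ 1 ∧ ∀ t ∈ Ico u v, wcat W (Om α β t) ∈ Om α β '' Ico (0 : ℝ) 1

lemma covers_nil : Covers α β [] 0 1 :=
  ⟨le_rfl, one_pos, le_rfl, fun t ht => ⟨t, ht, (wcat_nil _).symm⟩⟩

lemma Covers.append_digit {W : List ℕ} {u v u' v' : ℝ} (hβ : 0 < β) (h : Covers α β W u v)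
    (d : ℕ) (hu : u ≤ u') (huv : u' < v') (hv : v' ≤ v) (hd : (d - α) / β ≤ u')
    (hd' : v' ≤ (d + 1 - α) / β) :
    Covers α β (W ++ [d]) (β * u' + α - d) (β * v' + α - d) := by
  obtain ⟨hu0, -, hv1, hW⟩ := h
  rw [div_le_iff₀ hβ] at hd
  rw [le_div_iff₀ hβ] at hd'
  refine ⟨by linarith, by nlinarith, by linarith, fun t ht => ?_⟩
  obtain ⟨-, hOm⟩ := Om_preimage (α := α) (y := t) (d := d) hβ
    ⟨by linarith [ht.1], by linarith [ht.2]⟩ (by nlinarith [ht.1]) (by nlinarith [ht.2])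
  obtain ⟨x, hx, hxt⟩ := hW ((t + d - α) / β) ⟨by rw [le_div_iff₀ hβ]; nlinarith [ht.1],
    by rw [div_lt_iff₀ hβ]; nlinarith [ht.2]⟩
  exact ⟨x, hx, by rw [hxt, hOm, wcat_append]⟩

lemma pre_succ (s : ℕ → ℕ) (n : ℕ) : pre s (n + 1) = pre s n ++ [s n] := by
  rw [pre, pre, List.ofFn_succ', List.concat_eq_append]; rfl

lemma exists_covers_pre {x : ℝ} (hα0 : 0 ≤ α) (hβ : 0 < β) (hx : x ∈ Ico (0 : ℝ) 1) (n : ℕ) :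
    ∃ u v, u ≤ (F α β)^[n] x ∧ (F α β)^[n] x < v ∧ Covers α β (pre (Om α β x) n) u v := by
  induction n with
  | zero => exact ⟨0, 1, hx.1, hx.2, covers_nil⟩
  | succ n ih =>
    obtain ⟨u, v, hut, htv, hcov⟩ := ih
    set t := (F α β)^[n] x
    set d := Om α β x n
    have hd := Om_zero_le_and_lt (α := α) (β := β) (x := t)
      (by nlinarith [(iterate_F_mem_Ico (α := α) (β := β) hx n).1])
    rw [← Om_apply] at hd
    have hdt : (d - α) / β ≤ t := by rw [div_le_iff₀ hβ]; linarith [hd.1]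
    have htd : t < (d + 1 - α) / β := by rw [lt_div_iff₀ hβ]; linarith [hd.2]
    have hu' : max u ((d - α) / β) ≤ t := max_le hut hdt
    have hv' : t < min v ((d + 1 - α) / β) := lt_min htv htd
    have hFt : (F α β)^[n + 1] x = β * t + α - d := by
      rw [Function.iterate_succ_apply', F_eq_of_le_of_lt hd.1 hd.2]
    refine ⟨_, _, ?_, ?_, pre_succ (Om α β x) n ▸ hcov.append_digit hβ d (le_max_left u _)
      (hu'.trans_lt hv') (min_le_left _ _) (le_max_right _ _) (min_le_right _ _)⟩
    · rw [hFt]; nlinarith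
    · rw [hFt]; nlinarith

lemma Covers.exists_append_digit {W : List ℕ} {u v : ℝ} (hα0 : 0 ≤ α) (hβ : 2 < β)
    (h : Covers α β W u v) :
    (∃ d, Covers α β (W ++ [d]) 0 1) ∨
      ∃ d u' v', Covers α β (W ++ [d]) u' v' ∧ β / 2 * (v - u) ≤ v' - u' := by
  have hβ0 : 0 < β := by linarith
  obtain ⟨hu0, huv, -, -⟩ := id h
  set d := Om α β u 0
  have hd := Om_zero_le_and_lt (α := α) (β := β) (x := u) (by positivity)
  set p := (d + 1 - α) / β
  have hdu : (d - α) / β ≤ u := by rw [div_le_iff₀ hβ0]; linarith [hd.1]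
  have hup : u < p := by rw [lt_div_iff₀ hβ0]; linarith [hd.2]
  have hcast : ((d + 1 : ℕ) : ℝ) = d + 1 := by push_cast; ring
  rcases le_or_gt ((u + v) / 2) (min v p) with hmid | hmid
  · refine Or.inr ⟨d, _, _, h.append_digit hβ0 d le_rfl (lt_min huv hup) (min_le_left _ _) hdu
      (min_le_right _ _), ?_⟩
    nlinarith
  have hpv : p < (u + v) / 2 := by
    rcases min_lt_iff.1 hmid with h' | h'
    · linarith
    · exact h'
  have hp1 : ((d + 1 : ℕ) + 1 - α) / β = p + 1 / β := by rw [hcast]; ring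
  rcases le_or_gt v (p + 1 / β) with hv | hv
  · refine Or.inr ⟨d + 1, _, _, h.append_digit hβ0 (d + 1) hup.le (by linarith) le_rfl
      (by rw [hcast]) (by rw [hp1]; exact hv), ?_⟩
    nlinarith
  · refine Or.inl ⟨d + 1, ?_⟩
    have := h.append_digit hβ0 (d + 1) hup.le (by simp only [lt_add_iff_pos_right, one_div,
      inv_pos, hβ0]) hv.le (by rw [hcast]) (by rw [hp1])
    convert this using 1 <;> simp only [p, hcast] <;> field_simp <;> ring

lemma Covers.exists_append_covers_zero_one {W : List ℕ} {u v : ℝ} (hα0 : 0 ≤ α) (hβ : 2 < β)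
    (h : Covers α β W u v) : ∃ W₂, Covers α β (W ++ W₂) 0 1 := by
  suffices key : ∀ k : ℕ, ∀ W u v, Covers α β W u v → 1 < (β / 2) ^ k * (v - u) →
      ∃ W₂, Covers α β (W ++ W₂) 0 1 by
    obtain ⟨k, hk⟩ := pow_unbounded_of_one_lt (1 / (v - u)) (by linarith : (1 : ℝ) < β / 2)
    exact key k W u v h (by rwa [div_lt_iff₀ (by linarith [h.2.1])] at hk)
  intro k
  induction k with
  | zero =>
    intro W u v h hk
    linarith [h.1, h.2.2.1]
  | succ k ih =>
    intro W u v h hk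
    rcases h.exists_append_digit hα0 hβ with ⟨d, hd⟩ | ⟨d, u', v', h', hlen⟩
    · exact ⟨[d], hd⟩
    · obtain ⟨W₂, hW₂⟩ := ih _ u' v' h' (by
        rw [pow_succ] at hk
        nlinarith [pow_pos (by linarith : (0 : ℝ) < β / 2) k])
      exact ⟨[d] ++ W₂, by rwa [← List.append_assoc]⟩

lemma wcat_one_mem_image {z : ℕ → ℕ} (hα0 : 0 ≤ α) (hα1 : α < 1) (hβ : 2 < β)
    (hz : z ∈ Om α β '' Ico (0 : ℝ) 1) : wcat [1] z ∈ Om α β '' Ico (0 : ℝ) 1 := by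
  obtain ⟨t, ht, rfl⟩ := hz
  obtain ⟨hx, hOm⟩ := Om_preimage (α := α) (d := 1) (by linarith) ht
    (by push_cast; linarith [ht.1]) (by push_cast; linarith [ht.2])
  exact ⟨_, hx, hOm⟩

def block (r c m : ℕ) : List ℕ := List.replicate r 1 ++ c :: List.replicate m 1

lemma length_block (r c m : ℕ) : (block r c m).length = r + 1 + m := by
  simp [block]; omega

lemma getD_block {r c m i : ℕ} (hi : i < r + 1 + m) :
    (block r c m).getD i 0 = if i = r then c else 1 := by
  rw [List.getD_eq_getElem _ _ (by rw [length_block]; exact hi)]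
  simp only [block, List.getElem_append, List.length_replicate, List.getElem_replicate]
  rcases lt_trichotomy i r with h | rfl | h
  · simp [h, h.ne]
  · simp
  · simp [h.not_gt, h.ne', List.getElem_cons, show i - r ≠ 0 by omega]

lemma wcat_block_mem_image {c : ℕ} (hα0 : 0 ≤ α) (hα1 : α < 1) (hβ : 2 < β)
    (h₁ : α ≤ fixedPt α β + c) (h₂ : fixedPt α β + c < α + β) (r m : ℕ) :
    wcat (block r c m) (fun _ => 1) ∈ Om α β '' Ico (0 : ℝ) 1 := by
  have hp := fixedPt_mem_Ico hα0 hα1 hβ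
  rw [block, wcat_append, ← List.singleton_append, wcat_append, wcat_replicate_one,
    ← Om_fixedPt hα0 hα1 hβ]
  induction r with
  | zero =>
    obtain ⟨hx, hOm⟩ := Om_preimage (α := α) (β := β) (d := c) (by linarith) hp h₁ h₂
    exact ⟨_, hx, by rw [hOm, List.replicate_zero, wcat_nil]⟩
  | succ r ih =>
    rw [List.replicate_succ, ← List.singleton_append, wcat_append]
    exact wcat_one_mem_image hα0 hα1 hβ ih

lemma inLang_of_wcat_mem_image {w : List ℕ} {z : ℕ → ℕ} (h : wcat w z ∈ Om α β '' Ico (0 : ℝ) 1) :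
    inLang α β w := by
  obtain ⟨x, hx, hxz⟩ := h
  exact ⟨Om α β x, Om_mem_Sig hx, fun i => by simp [hxz, wcat]⟩

lemma exists_pre_eq_of_inLang {w : List ℕ} (hw : inLang α β w) :
    ∃ x ∈ Ico (0 : ℝ) 1, pre (Om α β x) w.length = w := by
  obtain ⟨y, hy, hyw⟩ := hw
  have hopen : IsOpen {z : ℕ → ℕ | ∀ i : Fin w.length, z i = y i} := by
    simp only [Set.ofPred_forall]
    exact isOpen_iInter_of_finite fun i : Fin w.length =>
      (isOpen_discrete {y i}).preimage (continuous_apply (A := fun _ : ℕ => ℕ) (i : ℕ))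
  obtain ⟨_, hz, ⟨x, hx, rfl⟩⟩ := mem_closure_iff.1 hy _ hopen fun _ => rfl
  exact ⟨x, hx, List.ext_get (by simp [pre]) fun i _ hi => by
    simpa [pre, hyw ⟨i, hi⟩] using hz ⟨i, hi⟩⟩

lemma kmax_eq_zero_of {s : ℕ → ℕ} {w : List ℕ} (h : ∀ k, tailAgrees s w k → k = 0) :
    kmax s w = 0 := by
  have hset : {k | tailAgrees s w k} = {0} := Set.eq_singleton_iff_unique_mem.2
    ⟨⟨Nat.zero_le _, fun i hi => absurd hi (Nat.not_lt_zero i)⟩, h⟩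
  rw [kmax, hset, csSup_singleton]

lemma kmax_append_block_eq_zero {σ : ℕ → ℕ} {w : List ℕ} {r c m : ℕ} (hσ : σ 0 ≠ 1)
    (hσc : σ 0 = c → ∃ i < m, σ (i + 1) ≠ 1)
    (hocc : ∀ s, 1 ≤ s → s ≤ w.length → ∃ i < r + 1 + m, σ (s + i) ≠ (block r c m).getD i 0) :
    kmax σ (w ++ block r c m) = 0 := by
  refine kmax_eq_zero_of fun k ⟨hk, hag⟩ => ?_
  rw [List.length_append, length_block] at hk hag
  have hB : ∀ j, w.length ≤ j → j < w.length + (r + 1 + m) →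
      (w ++ block r c m).getD j 0 = (block r c m).getD (j - w.length) 0 :=
    fun j hj _ => List.getD_append_right _ _ _ _ hj
  by_contra hk0
  rcases lt_or_ge (r + 1 + m) k with hlong | hshort
  · obtain ⟨i, hi, hne⟩ := hocc (k - (r + 1 + m)) (by omega) (by omega)
    refine hne ?_
    rw [← hag _ (by omega), hB _ (by omega) (by omega)]
    congr 1; omega
  · have h0 := hag 0 (by omega)
    rw [hB _ (by omega) (by omega), getD_block (by omega)] at h0
    split_ifs at h0 with hr
    · obtain ⟨i, hi, hne⟩ := hσc h0.symm
      refine hne ?_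
      rw [← hag (i + 1) (by omega), hB _ (by omega) (by omega), getD_block (by omega),
        if_neg (by omega)]
    · exact hσ h0.symm

/-- Either `σ` is eventually `1`, and then a long first run of ones pushes `c` into that tail,
or `σ` has letters `≠ 1` arbitrarily far out, and then a long last run of ones hits one. -/
lemma eventually_block_mismatch (σ : ℕ → ℕ) (N : ℕ) {c : ℕ} (hc : c ≠ 1) :
    ∀ᶠ r in atTop, ∀ᶠ m in atTop,
      ∀ s, 1 ≤ s → s ≤ N → ∃ i < r + 1 + m, σ (s + i) ≠ (block r c m).getD i 0 := by
  by_cases h : ∃ j₀, ∀ j ≥ j₀, σ j = 1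
  · obtain ⟨j₀, hj₀⟩ := h
    filter_upwards [eventually_ge_atTop j₀] with r hr
    refine Eventually.of_forall fun m s _ _ => ⟨r, by omega, ?_⟩
    rw [getD_block (by omega), if_pos rfl, hj₀ _ (by omega)]
    exact hc.symm
  · push Not at h
    refine Eventually.of_forall fun r => ?_
    obtain ⟨p, hp, hσp⟩ := h (N + r + 1)
    filter_upwards [eventually_ge_atTop p] with m hm s hs1 hsN
    refine ⟨p - s, by omega, ?_⟩
    rw [getD_block (by omega), if_neg (by omega), Nat.add_sub_cancel' (by omega)]
    exact hσp

lemma eventually_kmax_append_block_eq_zero {σ : ℕ → ℕ} (w : List ℕ) {c : ℕ} (hσ : σ 0 ≠ 1)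
    (hc : c ≠ 1) (hσc : σ 0 = c → ∃ i, σ (i + 1) ≠ 1) :
    ∀ᶠ r in atTop, ∀ᶠ m in atTop, kmax σ (w ++ block r c m) = 0 := by
  have hm : ∀ᶠ m in atTop, σ 0 = c → ∃ i < m, σ (i + 1) ≠ 1 := by
    by_cases h : σ 0 = c
    · obtain ⟨i, hi⟩ := hσc h
      filter_upwards [eventually_gt_atTop i] with m hm _ using ⟨i, hm, hi⟩
    · exact Eventually.of_forall fun _ h' => absurd h' h
  filter_upwards [eventually_block_mismatch σ w.length hc] with r hr
  filter_upwards [hr, hm] with m hocc hσm using kmax_append_block_eq_zero hσ hσm hocc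

theorem exists_path_to_root_general (α β : ℝ) (hα0 : 0 ≤ α) (hα1 : α < 1) (hβ : 2 < β)
    (b : ℕ → ℕ) (hbsup : ∀ y ∈ Sig α β, lexLe y b)
    (w : List ℕ) (hw : inLang α β w) :
    ∃ u : List ℕ, inLang α β (w ++ u) ∧
      kmax (Om α β 0) (w ++ u) = 0 ∧ kmax b (w ++ u) = 0 := by
  obtain ⟨x, hx, hxw⟩ := exists_pre_eq_of_inLang hw
  obtain ⟨u, v, -, -, hcov⟩ := exists_covers_pre hα0 (by linarith) hx w.length
  rw [hxw] at hcov
  obtain ⟨W, hW⟩ := hcov.exists_append_covers_zero_one hα0 hβ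
  obtain ⟨c, hc, hc₁, hc₂, hca, hcb⟩ := exists_separating_digit hα0 hα1 hβ hbsup
  have ha0 : Om α β 0 0 ≠ 1 := by rw [Om_zero_zero hα0 hα1]; norm_num
  have hb0 : b 0 ≠ 1 := by linarith [two_le_of_forall_lexLe hα0 hα1 hβ hbsup]
  obtain ⟨r, hr⟩ := ((eventually_kmax_append_block_eq_zero (w ++ W) ha0 hc hca).and
    (eventually_kmax_append_block_eq_zero (w ++ W) hb0 hc hcb)).exists
  obtain ⟨m, hma, hmb⟩ := (hr.1.and hr.2).exists
  obtain ⟨t, ht, hOm⟩ := wcat_block_mem_image hα0 hα1 hβ hc₁ hc₂ r m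
  have hlang : inLang α β (w ++ W ++ block r c m) := by
    refine inLang_of_wcat_mem_image (z := fun _ => 1) ?_
    rw [wcat_append, ← hOm]
    exact hW.2.2.2 t ht
  exact ⟨W ++ block r c m, by simpa only [List.append_assoc] using hlang,
    by simpa only [List.append_assoc] using hma, by simpa only [List.append_assoc] using hmb⟩

/-- **Corollary (path to the root).** For `0 ≤ α < 1` and `β > 2`: for every word
`w ∈ 𝓛` there is a word `u` with `wu ∈ 𝓛` and `k₁(wu) = k₂(wu) = 0`, i.e. from
every vertex of the Hofbauer-type graph there is a path to the root `[0,0]`. -/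
theorem exists_path_to_root (α β : ℝ) (hα0 : 0 ≤ α) (hα1 : α < 1) (hβ : 2 < β)
    (b : ℕ → ℕ) (hb : b ∈ Sig α β) (hbsup : ∀ y ∈ Sig α β, lexLe y b)
    (w : List ℕ) (hw : inLang α β w) :
    ∃ u : List ℕ, inLang α β (w ++ u) ∧
      kmax (Om α β 0) (w ++ u) = 0 ∧ kmax b (w ++ u) = 0 :=
  exists_path_to_root_general α β hα0 hα1 hβ b hbsup w hw

end IntermediateBeta
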